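/- Let M ≥ 1 and λ_a, λ_b ∈ ℝ^M with λ_a(m) > 0 and λ_b(m) > 0 for all m and G(λ_a, λ_b) > 0. Fix m₀ ∈ {1,…,M}, and for t > 0 let λ_a[t] denote the vector λ_a with its m₀-th entry replaced by t. Then the function p(t) = Q(G(λ_a[t], λ_b)) is differentiable at t = λ_a(m₀) and its derivative there satisfies |p'(λ_a(m₀))| ≤ (1/(2√(2π) G)) · e^{−G²/2} · | 1 − ( 2/(1 + λ_a(m₀)/λ_b(m₀)) )² |, where G = G(λ_a, λ_b). -/

import Mathlib

open Real MeasureTheory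

/-- The Gaussian tail function `Q(t) = ∫_t^∞ (1/√(2π)) e^{−x²/2} dx`. -/
noncomputable def gaussQ (t : ℝ) : ℝ :=
  ∫ x in Set.Ici t, (1 / Real.sqrt (2 * π)) * Real.exp (-x ^ 2 / 2)

/-- `G(λ_a, λ_b) = √(∑ (λ_a(m)−λ_b(m))²/(2(λ_a(m)+λ_b(m))))`. -/
noncomputable def Gfun {M : ℕ} (lam_a lam_b : Fin M → ℝ) : ℝ :=
  Real.sqrt (∑ m : Fin M, (lam_a m - lam_b m) ^ 2 / (2 * (lam_a m + lam_b m)))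

/-! Write `a = λ_a(m₀)`, `b = λ_b(m₀)` and `φ` for the standard normal density. By the chain rule
`p'(a) = -φ(G) · ∂ₜG(λ_a[t], λ_b)`. Only the `m₀`-th summand of `G²` depends on `t`, and its
derivative at `t = a` is `(1 - (2b/(a+b))²)/2`, so `∂ₜG = (1 - (2/(1+a/b))²)/(4G)` and `|p'(a)|`
is exactly half the stated bound. -/

section

variable {E : Type*} [NormedAddCommGroup E] [NormedSpace ℝ E] [CompleteSpace E]

theorem hasDerivAt_integral_Ici {f : ℝ → E} (hf : Integrable f) (hcont : Continuous f) (t : ℝ) :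
    HasDerivAt (fun u => ∫ x in Set.Ici u, f x) (-f t) t := by
  have htail : ∀ u, ∫ x in Set.Ici u, f x = (∫ x in Set.Ioi 0, f x) - ∫ x in (0 : ℝ)..u, f x := by
    intro u
    rw [integral_Ici_eq_integral_Ioi, ← intervalIntegral.integral_Ioi_sub_Ioi' hf.integrableOn
      hf.integrableOn, sub_sub_cancel]
  simp only [htail]
  exact (intervalIntegral.integral_hasDerivAt_right hf.intervalIntegrable
    (hcont.stronglyMeasurableAtFilter _ _) hcont.continuousAt).const_sub _

end

theorem hasDerivAt_gaussQ (t : ℝ) :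
    HasDerivAt gaussQ (-(1 / √(2 * π) * exp (-t ^ 2 / 2))) t := by
  have hint : Integrable fun x : ℝ => 1 / √(2 * π) * exp (-x ^ 2 / 2) := by
    simpa [neg_div, div_eq_inv_mul, mul_comm] using
      (integrable_exp_neg_mul_sq (b := 1 / 2) (by norm_num)).const_mul (1 / √(2 * π))
  exact hasDerivAt_integral_Ici hint (by fun_prop) t

theorem hasDerivAt_sum_apply_update {ι : Type*} [Fintype ι] [DecidableEq ι]
    {g : ι → ℝ → ℝ} {x : ι → ℝ} {i : ι} {d : ℝ} (hg : HasDerivAt (g i) d (x i)) :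
    HasDerivAt (fun t => ∑ m, g m (Function.update x i t m)) d (x i) := by
  have hsplit : ∀ t, ∑ m, g m (Function.update x i t m)
      = g i t + ∑ m ∈ Finset.univ \ {i}, g m (x m) := fun t => by
    simp only [Function.apply_update g, Finset.sum_update_of_mem (Finset.mem_univ i)]
  simp only [hsplit]
  exact hg.add_const _

theorem hasDerivAt_sq_sub_div_add {a b : ℝ} (hb : b ≠ 0) (hab : a + b ≠ 0) :
    HasDerivAt (fun t => (t - b) ^ 2 / (2 * (t + b)))
      ((1 - (2 / (1 + a / b)) ^ 2) / 2) a := by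
  have hnum : HasDerivAt (fun t : ℝ => (t - b) ^ 2) (2 * (a - b)) a := by
    simpa using ((hasDerivAt_id a).sub_const b).fun_pow 2
  have hden : HasDerivAt (fun t : ℝ => 2 * (t + b)) 2 a := by
    simpa using ((hasDerivAt_id a).add_const b).const_mul 2
  refine (hnum.fun_div hden (mul_ne_zero two_ne_zero hab)).congr_deriv ?_
  rw [one_add_div hb, add_comm b a]
  field_simp
  ring

theorem hasDerivAt_Gfun_update {M : ℕ} {lam_a lam_b : Fin M → ℝ} {m₀ : Fin M}
    (hb : lam_b m₀ ≠ 0) (hab : lam_a m₀ + lam_b m₀ ≠ 0) (hG : Gfun lam_a lam_b ≠ 0) :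
    HasDerivAt (fun t => Gfun (Function.update lam_a m₀ t) lam_b)
      ((1 - (2 / (1 + lam_a m₀ / lam_b m₀)) ^ 2) / 2 / (2 * Gfun lam_a lam_b)) (lam_a m₀) := by
  have hsum := hasDerivAt_sum_apply_update (g := fun m s => (s - lam_b m) ^ 2 / (2 * (s + lam_b m)))
    (x := lam_a) (hasDerivAt_sq_sub_div_add hb hab)
  have hsum_ne : ∑ m, (lam_a m - lam_b m) ^ 2 / (2 * (lam_a m + lam_b m)) ≠ 0 := fun h =>
    hG (by rw [Gfun, h, Real.sqrt_zero])
  have := hsum.sqrt (by rwa [Function.update_eq_self])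
  simpa only [Function.update_eq_self, Gfun] using this

theorem stmt15_general (M : ℕ) (lam_a lam_b : Fin M → ℝ)
    (ha : ∀ m, 0 < lam_a m) (hb : ∀ m, 0 < lam_b m)
    (hG : 0 < Gfun lam_a lam_b) (m₀ : Fin M)
    (p : ℝ → ℝ)
    (hp : ∀ t : ℝ, p t = gaussQ (Gfun (Function.update lam_a m₀ t) lam_b)) :
    DifferentiableAt ℝ p (lam_a m₀)
    ∧ |deriv p (lam_a m₀)|
      ≤ (1 / (2 * Real.sqrt (2 * π) * Gfun lam_a lam_b))
          * Real.exp (-(Gfun lam_a lam_b) ^ 2 / 2)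
          * |1 - (2 / (1 + lam_a m₀ / lam_b m₀)) ^ 2| := by
  set G := Gfun lam_a lam_b
  set E := 1 - (2 / (1 + lam_a m₀ / lam_b m₀)) ^ 2
  have hG' := hasDerivAt_Gfun_update (hb m₀).ne' (add_pos (ha m₀) (hb m₀)).ne' hG.ne'
  have hp' : HasDerivAt p (-(1 / √(2 * π) * exp (-G ^ 2 / 2)) * (E / 2 / (2 * G))) (lam_a m₀) := by
    rw [funext hp]
    exact HasDerivAt.comp_of_eq (hh₂ := hasDerivAt_gaussQ G) (hh := hG')
      (hy := by rw [Function.update_eq_self])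
  refine ⟨hp'.differentiableAt, ?_⟩
  set B := 1 / (2 * √(2 * π) * G) * exp (-G ^ 2 / 2) with hB_def
  have hderiv : deriv p (lam_a m₀) = -(B * E) / 2 := by
    rw [hp'.deriv, hB_def]
    ring
  have hB : 0 ≤ B := by positivity
  calc |deriv p (lam_a m₀)| = |B * E| / 2 := by rw [hderiv, abs_div, abs_neg, abs_two]
    _ ≤ |B * E| := half_le_self (abs_nonneg _)
    _ = B * |E| := by rw [abs_mul, abs_of_nonneg hB]

/-- With `λ_a(m), λ_b(m) > 0` and `G = G(λ_a,λ_b) > 0`, the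
function `p(t) = Q(G(λ_a[t], λ_b))`, where `λ_a[t]` replaces the `m₀`-th
entry of `λ_a` by `t`, is differentiable at `t = λ_a(m₀)` and
`|p'(λ_a(m₀))| ≤ (1/(2√(2π) G)) e^{−G²/2} |1 − (2/(1+λ_a(m₀)/λ_b(m₀)))²|`. -/
theorem stmt15 (M : ℕ) (hM : 1 ≤ M) (lam_a lam_b : Fin M → ℝ)
    (ha : ∀ m, 0 < lam_a m) (hb : ∀ m, 0 < lam_b m)
    (hG : 0 < Gfun lam_a lam_b) (m₀ : Fin M)
    (p : ℝ → ℝ)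
    (hp : ∀ t : ℝ, p t = gaussQ (Gfun (Function.update lam_a m₀ t) lam_b)) :
    DifferentiableAt ℝ p (lam_a m₀)
    ∧ |deriv p (lam_a m₀)|
      ≤ (1 / (2 * Real.sqrt (2 * π) * Gfun lam_a lam_b))
          * Real.exp (-(Gfun lam_a lam_b) ^ 2 / 2)
          * |1 - (2 / (1 + lam_a m₀ / lam_b m₀)) ^ 2| :=
  stmt15_general M lam_a lam_b ha hb hG m₀ p hp
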